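/- arXiv:1708.05726 — 2 statements merged into one kernel-verified Lean document; each statement's English description precedes it below -/
import Mathlib

section
/- Let S, E : ℝ → [0,∞) be differentiable and satisfy S'(t) + E'(t) ≤ A - μ(S(t) + E(t)) for all t ∈ ℝ, with S + E bounded on ℝ. Then S(t) + E(t) ≤ A/μ for all t ∈ ℝ. -/
/-!
Put `u = S + E - A / μ`, so that `u' ≤ -μ u`. Then `u t * exp (μ t)` is nonincreasing. If `u t₀ > 0`,
then `u s * exp (μ s) ≥ u t₀ * exp (μ t₀) > 0` for all `s ≤ t₀`, while an upper bound `u ≤ M` forces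
`u s * exp (μ s) ≤ M * exp (μ s) → 0` as `s → -∞`.
-/

open Real Filter Topology

theorem antitone_mul_exp_of_deriv_le_neg_mul {u : ℝ → ℝ} {μ : ℝ} (hu : Differentiable ℝ u)
    (hderiv : ∀ t, deriv u t ≤ -μ * u t) : Antitone fun t => u t * exp (μ * t) := by
  have hasDeriv : ∀ t, HasDerivAt (fun t => u t * exp (μ * t))
      (deriv u t * exp (μ * t) + u t * (exp (μ * t) * μ)) t := fun t => by
    simpa using (hu t).hasDerivAt.fun_mul ((hasDerivAt_id t).const_mul μ).exp
  refine antitone_of_deriv_nonpos (fun t => (hasDeriv t).differentiableAt) fun t => ?_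
  rw [(hasDeriv t).deriv]
  nlinarith [hderiv t, exp_pos (μ * t)]

theorem nonpos_of_deriv_le_neg_mul_of_bddAbove {u : ℝ → ℝ} {μ : ℝ} (hμ : 0 < μ)
    (hu : Differentiable ℝ u) (hderiv : ∀ t, deriv u t ≤ -μ * u t) (hbdd : BddAbove (Set.range u))
    (t₀ : ℝ) : u t₀ ≤ 0 := by
  obtain ⟨M, hM⟩ := hbdd
  by_contra! hpos
  have hdecay : Tendsto (fun s => M * exp (μ * s)) atBot (𝓝 0) := by
    simpa using (tendsto_exp_atBot.comp (tendsto_id.const_mul_atBot hμ)).const_mul M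
  obtain ⟨s, hsM, hst⟩ := ((hdecay.eventually
    (gt_mem_nhds (mul_pos hpos (exp_pos (μ * t₀))))).and (eventually_le_atBot t₀)).exists
  have hmono := antitone_mul_exp_of_deriv_le_neg_mul hu hderiv hst
  have hus : u s * exp (μ * s) ≤ M * exp (μ * s) :=
    mul_le_mul_of_nonneg_right (hM ⟨s, rfl⟩) (exp_pos _).le
  simp only at hmono
  linarith

theorem le_div_of_deriv_le_sub_mul_of_bddAbove {f : ℝ → ℝ} {A μ : ℝ} (hμ : 0 < μ)
    (hf : Differentiable ℝ f) (hderiv : ∀ t, deriv f t ≤ A - μ * f t)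
    (hbdd : BddAbove (Set.range f)) (t : ℝ) : f t ≤ A / μ := by
  have hshift : ∀ t, deriv (fun t => f t - A / μ) t ≤ -μ * (f t - A / μ) := fun t => by
    rw [deriv_sub_const]
    linarith [hderiv t, mul_div_cancel₀ A hμ.ne']
  have hbdd' : BddAbove (Set.range fun t => f t - A / μ) := by
    obtain ⟨M, hM⟩ := hbdd
    exact ⟨M - A / μ, by rintro _ ⟨s, rfl⟩; linarith [hM ⟨s, rfl⟩]⟩
  linarith [nonpos_of_deriv_le_neg_mul_of_bddAbove hμ (hf.sub_const _) hshift hbdd' t]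

theorem stmt_7_general (A μ : ℝ) (hμ : 0 < μ) (S E : ℝ → ℝ)
    (hSd : Differentiable ℝ S) (hEd : Differentiable ℝ E)
    (hineq : ∀ t, deriv S t + deriv E t ≤ A - μ * (S t + E t))
    (hbdd : ∃ M, ∀ t, S t + E t ≤ M) :
    ∀ t, S t + E t ≤ A / μ := by
  have hderiv : ∀ t, deriv (fun t => S t + E t) t ≤ A - μ * (S t + E t) := fun t =>
    (deriv_fun_add (hSd t) (hEd t)).trans_le (hineq t)
  obtain ⟨M, hM⟩ := hbdd
  exact le_div_of_deriv_le_sub_mul_of_bddAbove hμ (hSd.add hEd) hderiv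
    ⟨M, by rintro _ ⟨t, rfl⟩; exact hM t⟩

theorem stmt_7 (A μ : ℝ) (hA : 0 < A) (hμ : 0 < μ) (S E : ℝ → ℝ)
    (hSd : Differentiable ℝ S) (hEd : Differentiable ℝ E)
    (hpos : ∀ t, 0 ≤ S t ∧ 0 ≤ E t)
    (hineq : ∀ t, deriv S t + deriv E t ≤ A - μ * (S t + E t))
    (hbdd : ∃ M, ∀ t, S t + E t ≤ M) :
    ∀ t, S t + E t ≤ A / μ :=
  stmt_7_general A μ hμ S E hSd hEd hineq hbdd
end

section
/- Let H(y) = y - ln y - 1, let f be an incidence function satisfying: for fixed S and J* > 0, x < J* implies x/J* < f(S,x)/f(S,J*) < 1 and x > J* implies 1 < f(S,x)/f(S,J*) < x/J*. Then for any J > 0 with J ≠ J* (and also J = J*), H(f(S,J)/f(S,J*)) ≤ H(J/J*). -/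
/-!
Writing `y = f(S,J)/f(S,J*)` and `x = J/J*`, the hypotheses say that `y` lies between `1` and `x`.
Since `H(y) = y - ln y - 1` decreases on `(0,1]` and increases on `[1,∞)`,
moving from `x` towards `1` can only decrease `H`.
-/

open Real Set

/-- The function `H` of the paper (Volterra's function). -/
noncomputable def volterra (y : ℝ) : ℝ := y - log y - 1

/-- The factor `1 - 1 / b` has a fixed sign on each side of `1`; this gives both monotonicity
statements below. -/
lemma volterra_sub_volterra_le {a b : ℝ} (ha : 0 < a) (hb : 0 < b) :
    volterra b - volterra a ≤ (b - a) * (1 - 1 / b) := by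
  have hlog := log_le_sub_one_of_pos (div_pos ha hb)
  rw [log_div ha.ne' hb.ne'] at hlog
  have hexpand : (b - a) * (1 - 1 / b) = b - a + (a / b - 1) := by field_simp; ring
  unfold volterra
  linarith

lemma antitoneOn_volterra : AntitoneOn volterra (Ioc 0 1) := by
  rintro a ⟨ha, -⟩ b ⟨hb, hb1⟩ hab
  have hfactor : 1 - 1 / b ≤ 0 := by rw [sub_nonpos, le_div_iff₀ hb]; linarith
  linarith [volterra_sub_volterra_le ha hb,
    mul_nonpos_of_nonneg_of_nonpos (sub_nonneg.2 hab) hfactor]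

lemma monotoneOn_volterra : MonotoneOn volterra (Ici 1) := by
  rintro a ha b - hab
  have ha0 : 0 < a := zero_lt_one.trans_le ha
  have hfactor : 0 ≤ 1 - 1 / a := by rw [sub_nonneg, div_le_iff₀ ha0]; linarith [mem_Ici.1 ha]
  linarith [volterra_sub_volterra_le (ha0.trans_le hab) ha0,
    mul_nonpos_of_nonpos_of_nonneg (sub_nonpos.2 hab) hfactor]

theorem stmt_10 (f : ℝ → ℝ → ℝ) (S Jstar : ℝ) (hJstar : 0 < Jstar)
    (hpos : ∀ J, 0 < J → 0 < f S J)
    (h1 : ∀ x, 0 < x → x < Jstar →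
      x / Jstar < f S x / f S Jstar ∧ f S x / f S Jstar < 1)
    (h2 : ∀ x, Jstar < x →
      1 < f S x / f S Jstar ∧ f S x / f S Jstar < x / Jstar) :
    ∀ J, 0 < J →
      f S J / f S Jstar - Real.log (f S J / f S Jstar) - 1
        ≤ J / Jstar - Real.log (J / Jstar) - 1 := by
  intro J hJ
  show volterra _ ≤ volterra _
  rcases lt_trichotomy J Jstar with hlt | rfl | hgt
  · obtain ⟨hlow, hup⟩ := h1 J hJ hlt
    exact antitoneOn_volterra ⟨div_pos hJ hJstar, (hlow.trans hup).le⟩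
      ⟨(div_pos hJ hJstar).trans hlow, hup.le⟩ hlow.le
  · rw [div_self (hpos J hJ).ne', div_self hJ.ne']
  · obtain ⟨hlow, hup⟩ := h2 J hgt
    exact monotoneOn_volterra (mem_Ici.2 hlow.le) (mem_Ici.2 (hlow.trans hup).le) hup.le
end
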